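/- arXiv:2303.10515 — 2 statements merged into one kernel-verified Lean document; each statement's English description precedes it below -/
import Mathlib

section
/- Let P be a type, Δ a finite set of triples of elements of P, and Σ, Σ¬ finite sets of elements of P. Then there exists a list L of clauses, where each clause is a list of at most 3 literals and a literal is a pair (p, b) with p ∈ P and b a Boolean polarity, such that the length of L is at most 6·|Δ| + |Σ| + |Σ¬|, and the ownership constraint system (P, Δ, Σ, Σ¬) has a solution if and only if there exists an assignment g : P → Bool satisfying every clause of L (a clause is satisfied when some literal (p, b) in it has g p = b). -/
/-- Linear-size equisatisfiable CNF (NP-membership direction of Theorem 3):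
for any ownership constraint system `(P, Δ, S, Sn)` there is a list `L` of
clauses (each a list of at most 3 literals, a literal being a pair `(p, b)`
of a variable and a Boolean polarity) with `|L| ≤ 6·|Δ| + |S| + |Sn|`, such
that the system has a solution iff some assignment `g : P → Bool` satisfies
every clause of `L`. -/
theorem ownership_system_cnf
    {P : Type*} (Δ : Finset (P × P × P)) (S Sn : Finset P) :
    ∃ L : List (List (P × Bool)),
      (∀ c ∈ L, c.length ≤ 3) ∧
      L.length ≤ 6 * Δ.card + S.card + Sn.card ∧
      ((∃ f : P → ℕ,
          (∀ p, f p ≤ 1) ∧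
          (∀ v w u, (v, w, u) ∈ Δ → f v = f w + f u) ∧
          (∀ x ∈ S, f x = 1) ∧
          (∀ x ∈ Sn, f x = 0)) ↔
       (∃ g : P → Bool, ∀ c ∈ L, ∃ l ∈ c, g l.1 = l.2)) := by
  classical
  refine ⟨(Δ.toList.flatMap fun t =>
      [[(t.1, false), (t.2.1, true), (t.2.2, true)],
       [(t.1, true), (t.2.1, false)],
       [(t.1, true), (t.2.2, false)],
       [(t.2.1, false), (t.2.2, false)]]) ++
    (S.toList.map fun x => [(x, true)]) ++
    (Sn.toList.map fun x => [(x, false)]), ?_, ?_, ?_⟩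
  · intro c hc
    simp only [List.mem_append, List.mem_flatMap, List.mem_map] at hc
    rcases hc with (⟨t, _, hc⟩ | ⟨x, _, rfl⟩) | ⟨x, _, rfl⟩
    · simp only [List.mem_cons, List.mem_singleton, List.not_mem_nil, or_false] at hc
      rcases hc with rfl | rfl | rfl | rfl <;> simp
    · simp
    · simp
  · have h1 : ((Δ.toList.flatMap fun t =>
      [[(t.1, false), (t.2.1, true), (t.2.2, true)],
       [(t.1, true), (t.2.1, false)],
       [(t.1, true), (t.2.2, false)],
       [(t.2.1, false), (t.2.2, false)]]) : List (List (P × Bool))).length = 4 * Δ.card := by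
      rw [List.length_flatMap]
      simp [Finset.length_toList, mul_comm]
    simp only [List.length_append, h1, List.length_map, Finset.length_toList]
    omega
  · constructor
    · rintro ⟨f, hle, hΔ, hS, hSn⟩
      refine ⟨fun p => decide (f p = 1), ?_⟩
      intro c hc
      simp only [List.mem_append, List.mem_flatMap, List.mem_map] at hc
      rcases hc with (⟨⟨v, w, u⟩, ht, hc⟩ | ⟨x, hx, rfl⟩) | ⟨x, hx, rfl⟩
      · have e := hΔ v w u (Finset.mem_toList.mp ht)
        have h1 := hle v; have h2 := hle w; have h3 := hle u
        simp only [List.mem_cons, List.mem_singleton, List.not_mem_nil, or_false] at hc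
        rcases hc with rfl | rfl | rfl | rfl <;>
          simp only [List.mem_cons, List.not_mem_nil, or_false] <;>
          · refine ?_
            by_cases hv : f v = 1 <;> by_cases hw : f w = 1 <;> by_cases hu : f u = 1 <;>
              simp_all <;> omega
      · exact ⟨(x, true), by simp, by simp [hS x (Finset.mem_toList.mp hx)]⟩
      · exact ⟨(x, false), by simp, by simp [hSn x (Finset.mem_toList.mp hx)]⟩
    · rintro ⟨g, hg⟩
      refine ⟨fun p => if g p then 1 else 0, fun p => by by_cases h : g p <;> simp [h], ?_, ?_, ?_⟩
      · intro v w u hvwu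
        have hm : (v, w, u) ∈ Δ.toList := Finset.mem_toList.mpr hvwu
        have c1 := hg [(v, false), (w, true), (u, true)] (by
          simp only [List.mem_append, List.mem_flatMap]; left; left
          exact ⟨(v, w, u), hm, by simp⟩)
        have c2 := hg [(v, true), (w, false)] (by
          simp only [List.mem_append, List.mem_flatMap]; left; left
          exact ⟨(v, w, u), hm, by simp⟩)
        have c3 := hg [(v, true), (u, false)] (by
          simp only [List.mem_append, List.mem_flatMap]; left; left
          exact ⟨(v, w, u), hm, by simp⟩)
        have c4 := hg [(w, false), (u, false)] (by
          simp only [List.mem_append, List.mem_flatMap]; left; left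
          exact ⟨(v, w, u), hm, by simp⟩)
        simp only [List.mem_cons, List.not_mem_nil, or_false, List.mem_singleton] at c1 c2 c3 c4
        clear hg
        cases hv : g v <;> cases hw : g w <;> cases hu : g u <;> simp_all
      · intro x hx
        have c := hg [(x, true)] (by
          simp only [List.mem_append, List.mem_map]
          left; right; exact ⟨x, Finset.mem_toList.mpr hx, rfl⟩)
        clear hg
        simp only [List.mem_singleton] at c
        obtain ⟨l, rfl, hl⟩ := c
        simp [hl]
      · intro x hx
        have c := hg [(x, false)] (by
          simp only [List.mem_append, List.mem_map]
          right; exact ⟨x, Finset.mem_toList.mpr hx, rfl⟩)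
        clear hg
        simp only [List.mem_singleton] at c
        obtain ⟨l, rfl, hl⟩ := c
        simp [hl]
end

section
/- Let V be a type of propositional variables and let an instance of monotone one-in-three SAT consist of n clauses, where clause i (for i ∈ Fin n) is a triple (c i 0, c i 1, c i 2) of elements of V. Define an ownership constraint system over the variable type P = V ⊕ Fin n ⊕ Fin n by: for each i, Δ contains the constraints O_{m_i} = O_{c i 0} + O_{c i 1} and O_{t_i} = O_{c i 2} + O_{m_i}, where m_i and t_i denote the two fresh variables in the second and third summands indexed by i; Σ = { t_i : i ∈ Fin n }; and Σ¬ = ∅. Then there exists an assignment a : V → Bool such that every clause has exactly one true variable if and only if the constructed ownership constraint system has a solution. -/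
/-- Correctness of the reduction from monotone one-in-three SAT (NP-hardness
direction of Theorem 3): given `n` clauses, clause `i` being the triple
`(c i 0, c i 1, c i 2)` of variables, the ownership constraint system over
`P = V ⊕ Fin n ⊕ Fin n` with constraints `O_{m_i} = O_{c i 0} + O_{c i 1}`,
`O_{t_i} = O_{c i 2} + O_{m_i}` (where `m_i = Sum.inr (Sum.inl i)` and
`t_i = Sum.inr (Sum.inr i)`), `Σ = {t_i}` and `Σ¬ = ∅` has a solution iff
there is an assignment making exactly one variable true in each clause. -/
theorem one_in_three_sat_reduction
    {V : Type*} (n : ℕ) (c : Fin n → Fin 3 → V) :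
    (∃ a : V → Bool, ∀ i : Fin n,
        (if a (c i 0) then 1 else 0) + (if a (c i 1) then 1 else 0) +
          (if a (c i 2) then 1 else 0) = 1) ↔
    (∃ f : V ⊕ Fin n ⊕ Fin n → ℕ,
        (∀ p, f p ≤ 1) ∧
        (∀ i : Fin n,
          f (Sum.inr (Sum.inl i)) = f (Sum.inl (c i 0)) + f (Sum.inl (c i 1)) ∧
          f (Sum.inr (Sum.inr i)) = f (Sum.inl (c i 2)) + f (Sum.inr (Sum.inl i))) ∧
        (∀ i : Fin n, f (Sum.inr (Sum.inr i)) = 1)) := by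
  constructor
  · rintro ⟨a, ha⟩
    refine ⟨Sum.elim (fun v => if a v then 1 else 0)
      (Sum.elim (fun i => (if a (c i 0) then 1 else 0) + (if a (c i 1) then 1 else 0))
        (fun _ => 1)), ?_, ?_, ?_⟩
    · rintro (v | i | i) <;> simp only [Sum.elim_inl, Sum.elim_inr]
      · split <;> omega
      · have := ha i; split_ifs at this ⊢ <;> omega
      · omega
    · intro i
      simp only [Sum.elim_inl, Sum.elim_inr]
      refine ⟨trivial, ?_⟩
      have := ha i; split_ifs at this ⊢ <;> omega
    · intro i; simp
  · rintro ⟨f, hle, hΔ, ht⟩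
    refine ⟨fun v => f (Sum.inl v) = 1, ?_⟩
    intro i
    obtain ⟨h1, h2⟩ := hΔ i
    have := ht i
    have h0 := hle (Sum.inl (c i 0))
    have h1' := hle (Sum.inl (c i 1))
    have h2' := hle (Sum.inl (c i 2))
    simp only [decide_eq_true_eq]
    split_ifs <;> omega
end
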